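/- arXiv:1010.5182 — 2 statements merged into one kernel-verified Lean document; each statement's English description precedes it below -/
import Mathlib

section
/- Suppose F = F(M,p,u) : S_N × ℝ^N × ℝ → ℝ (independent of x) satisfies (H0), (H1) and (H3), and let l : ℝ^N → S_N be a linear map. Then the function h : ℝ^N → ℝ defined by h(p) := F(l(p) + p⊗p, p, 1), where p⊗p denotes the rank-one matrix with entries p_i p_j, is convex. -/
open MeasureTheory Metric Set Filter Topology
open scoped UniformConvergence ENNReal

noncomputable section

/-- Square matrices of size `N`, represented as functions. -/
abbrev Mat (N : ℕ) := Fin N → Fin N → ℝ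

/-- Type of fully nonlinear second-order operators `F(M, p, u, x)`. -/
abbrev OpType (N : ℕ) := Mat N → (Fin N → ℝ) → ℝ → (Fin N → ℝ) → ℝ

/-- A matrix is symmetric. -/
def IsSymmMat {N : ℕ} (M : Mat N) : Prop := ∀ i j, M i j = M j i

/-- The `i`-th standard basis vector of `ℝ^N`. -/
def basisVec {N : ℕ} (i : Fin N) : Fin N → ℝ := Pi.single i 1

/-- The gradient `Du(x)` of a function `u : ℝ^N → ℝ`. -/
def Grad {N : ℕ} (u : (Fin N → ℝ) → ℝ) (x : Fin N → ℝ) : Fin N → ℝ :=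
  fun i => fderiv ℝ u x (basisVec i)

/-- The Hessian matrix `D²u(x)` of a function `u : ℝ^N → ℝ`. -/
def Hess {N : ℕ} (u : (Fin N → ℝ) → ℝ) (x : Fin N → ℝ) : Mat N :=
  fun i j => fderiv ℝ (fun y => fderiv ℝ u y (basisVec j)) x (basisVec i)

/-- The set `𝒜` of symmetric matrices whose eigenvalues lie in `[lam, Lam]`,
expressed through the two-sided bound on the associated quadratic form. -/
def PucciMats (N : ℕ) (lam Lam : ℝ) : Set (Mat N) :=
  {A | IsSymmMat A ∧ ∀ v : Fin N → ℝ,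
      lam * ∑ i, v i ^ 2 ≤ ∑ i, ∑ j, A i j * v i * v j ∧
      ∑ i, ∑ j, A i j * v i * v j ≤ Lam * ∑ i, v i ^ 2}

/-- Pucci's maximal operator `M⁺_{lam,Lam}(M) = sup_{A ∈ 𝒜} tr (A M)`. -/
def PucciSup {N : ℕ} (lam Lam : ℝ) (M : Mat N) : ℝ :=
  sSup ((fun A : Mat N => ∑ i, ∑ j, A i j * M j i) '' PucciMats N lam Lam)

/-- Pucci's minimal operator `M⁻_{lam,Lam}(M) = inf_{A ∈ 𝒜} tr (A M)`. -/
def PucciInf {N : ℕ} (lam Lam : ℝ) (M : Mat N) : ℝ :=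
  sInf ((fun A : Mat N => ∑ i, ∑ j, A i j * M j i) '' PucciMats N lam Lam)

/-- `F[u](x) = F(D²u(x), Du(x), u(x), x)`. -/
def FOp {N : ℕ} (F : OpType N) (u : (Fin N → ℝ) → ℝ) (x : Fin N → ℝ) : ℝ :=
  F (Hess u x) (Grad u x) (u x) x

/-- `u ∈ C(Ω̄)` solves `F[u] = g` a.e. in `Ω`, `u = 0` on `∂Ω`. -/
def IsSol {N : ℕ} (F : OpType N) (Ω : Set (Fin N → ℝ)) (g : (Fin N → ℝ) → ℝ)
    (u : (Fin N → ℝ) → ℝ) : Prop :=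
  ContinuousOn u (closure Ω) ∧
  (∀ᵐ x ∂(volume.restrict Ω), FOp F u x = g x) ∧
  ∀ x ∈ frontier Ω, u x = 0

/-- The principal eigenvalue `λ₁⁺(F,Ω)`. -/
def lamPlus {N : ℕ} (F : OpType N) (Ω : Set (Fin N → ℝ)) : ℝ :=
  sSup {μ : ℝ | ∃ ψ : (Fin N → ℝ) → ℝ, ContinuousOn ψ (closure Ω) ∧
    (∀ x ∈ Ω, 0 < ψ x) ∧
    ∀ᵐ x ∂(volume.restrict Ω), FOp F ψ x + μ * ψ x ≤ 0}

/-- The principal eigenvalue `λ₁⁻(F,Ω)`. -/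
def lamMinus {N : ℕ} (F : OpType N) (Ω : Set (Fin N → ℝ)) : ℝ :=
  sSup {μ : ℝ | ∃ ψ : (Fin N → ℝ) → ℝ, ContinuousOn ψ (closure Ω) ∧
    (∀ x ∈ Ω, ψ x < 0) ∧
    ∀ᵐ x ∂(volume.restrict Ω), 0 ≤ FOp F ψ x + μ * ψ x}

/-- `Ω` satisfies a uniform interior ball condition. -/
def UnifIntBall {N : ℕ} (Ω : Set (Fin N → ℝ)) : Prop :=
  ∃ r > (0:ℝ), ∀ x ∈ frontier Ω, ∃ y ∈ Ω, ball y r ⊆ Ω ∧ dist x y = r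

/-- The sup-norm `‖u‖_{L^∞(Ω)}` of a continuous function on `Ω̄`. -/
def supNormOn {N : ℕ} (Ω : Set (Fin N → ℝ)) (u : (Fin N → ℝ) → ℝ) : ℝ :=
  sSup ((fun x => |u x|) '' closure Ω)

/-- The pair `(u,t)` viewed in `C(Ω̄) × ℝ`, where the function space carries
the topology of uniform convergence on `Ω̄`. -/
def pairU {N : ℕ} (Ω : Set (Fin N → ℝ)) (z : ((Fin N → ℝ) → ℝ) × ℝ) :
    (↥(closure Ω) →ᵤ ℝ) × ℝ :=
  (UniformFun.ofFun (fun x : ↥(closure Ω) => z.1 x), z.2)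

/-- The geometric and structural data: a bounded domain `Ω ⊂ ℝ^N` with uniform
interior ball condition, and the constants `0 < lam ≤ Lam`, `gamma, delta ≥ 0`. -/
structure DomainData (N : ℕ) where
  Ω : Set (Fin N → ℝ)
  lam : ℝ
  Lam : ℝ
  gamma : ℝ
  delta : ℝ
  hN : 1 ≤ N
  hopen : IsOpen Ω
  hconn : IsConnected Ω
  hbdd : Bornology.IsBounded Ω
  hball : UnifIntBall Ω
  hlam : 0 < lam
  hlamLam : lam ≤ Lam
  hgamma : 0 ≤ gamma
  hdelta : 0 ≤ delta

/-- The structure hypotheses (H0)-(H3) on the operator `F`. -/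
def DomainData.OpOK {N : ℕ} (D : DomainData N) (F : OpType N) : Prop :=
  -- (H0) positive homogeneity of degree 1
  (∀ t : ℝ, 0 ≤ t → ∀ M p u x, F (t • M) (t • p) (t * u) x = t * F M p u x) ∧
  -- (H1) uniform ellipticity, for a.e. x ∈ Ω
  (∀ᵐ x ∂(volume.restrict D.Ω), ∀ M M' : Mat N, IsSymmMat M → IsSymmMat M' →
    ∀ (p p' : Fin N → ℝ) (u u' : ℝ),
      PucciInf D.lam D.Lam (M - M') - D.gamma * ‖p - p'‖ - D.delta * |u - u'|
          ≤ F M p u x - F M' p' u' x ∧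
        F M p u x - F M' p' u' x
          ≤ PucciSup D.lam D.Lam (M - M') + D.gamma * ‖p - p'‖ + D.delta * |u - u'|) ∧
  -- (H2) continuity of F(M,0,0,x) on S_N × Ω̄
  ContinuousOn (fun q : Mat N × (Fin N → ℝ) => F q.1 0 0 q.2) (univ ×ˢ closure D.Ω) ∧
  -- (H3) convexity-type inequality
  (∀ (M M' : Mat N) (p p' : Fin N → ℝ) (u u' : ℝ), ∀ x ∈ D.Ω,
      -(F (-(M - M')) (-(p - p')) (-(u - u')) x) ≤ F M p u x - F M' p' u' x ∧
      F M p u x - F M' p' u' x ≤ F (M - M') (p - p') (u - u') x)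

/-- `φ` is a principal eigenfunction associated to `λ₁⁺(F,Ω)`:
positive in `Ω`, vanishing on `∂Ω`, with `F[φ] + λ₁⁺ φ = 0`. -/
def IsEigenPlus {N : ℕ} (D : DomainData N) (F : OpType N) (φ : (Fin N → ℝ) → ℝ) : Prop :=
  ContinuousOn φ (closure D.Ω) ∧ (∀ x ∈ D.Ω, 0 < φ x) ∧
  (∀ x ∈ frontier D.Ω, φ x = 0) ∧
  ∀ᵐ x ∂(volume.restrict D.Ω), FOp F φ x + lamPlus F D.Ω * φ x = 0

/-- `φ` is a principal eigenfunction associated to `λ₁⁻(F,Ω)`: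
negative in `Ω`, vanishing on `∂Ω`, with `F[φ] + λ₁⁻ φ = 0`. -/
def IsEigenMinus {N : ℕ} (D : DomainData N) (F : OpType N) (φ : (Fin N → ℝ) → ℝ) : Prop :=
  ContinuousOn φ (closure D.Ω) ∧ (∀ x ∈ D.Ω, φ x < 0) ∧
  (∀ x ∈ frontier D.Ω, φ x = 0) ∧
  ∀ᵐ x ∂(volume.restrict D.Ω), FOp F φ x + lamMinus F D.Ω * φ x = 0

/-- `h ∈ L^p(Ω)` with `p > N`, and `h` is not a multiple of `φ`. -/
def GoodRHS {N : ℕ} (D : DomainData N) (p : ℝ) (h φ : (Fin N → ℝ) → ℝ) : Prop :=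
  (N : ℝ) < p ∧ MemLp h (ENNReal.ofReal p) (volume.restrict D.Ω) ∧
  ¬ ∃ c : ℝ, ∀ x ∈ D.Ω, h x = c * φ x

/-- `u` solves problem `(P_t)` : `F[u] = t φ₁⁺ + h` in `Ω`, `u = 0` on `∂Ω`. -/
def Sol {N : ℕ} (D : DomainData N) (F : OpType N) (φ h : (Fin N → ℝ) → ℝ) (t : ℝ)
    (u : (Fin N → ℝ) → ℝ) : Prop :=
  IsSol F D.Ω (fun x => t * φ x + h x) u

/-! The map `p ↦ l p + p ⊗ p` is convex for the Loewner order: for `a + b = 1` the defect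
`a (l x + x ⊗ x) + b (l y + y ⊗ y) - (l z + z ⊗ z)`, `z = a x + b y`, is the nonnegative
rank-one matrix `a b (x - y) ⊗ (x - y)`, on which `M⁻` is nonnegative. By (H1), `F` is therefore
monotone along this defect, while (H0) and (H3) make `F` sublinear, hence jointly convex. -/

theorem convexOn_univ_of_subadditive_of_homogeneous {E : Type*} [AddCommMonoid E] [Module ℝ E]
    {f : E → ℝ} (hadd : ∀ x y, f (x + y) ≤ f x + f y)
    (hsmul : ∀ t : ℝ, 0 ≤ t → ∀ x, f (t • x) = t * f x) :
    ConvexOn ℝ univ f := by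
  refine ⟨convex_univ, fun x _ y _ a b ha hb _ => ?_⟩
  calc f (a • x + b • y) ≤ f (a • x) + f (b • y) := hadd _ _
    _ = a • f x + b • f y := by rw [hsmul a ha, hsmul b hb, smul_eq_mul, smul_eq_mul]

theorem IsSymmMat.add {N : ℕ} {M M' : Mat N} (hM : IsSymmMat M) (hM' : IsSymmMat M') :
    IsSymmMat (M + M') := fun i j => by simp only [Pi.add_apply, hM i j, hM' i j]

theorem IsSymmMat.smul {N : ℕ} {M : Mat N} (hM : IsSymmMat M) (c : ℝ) :
    IsSymmMat (c • M) := fun i j => by simp only [Pi.smul_apply, hM i j]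

theorem isSymmMat_rankOne {N : ℕ} (v : Fin N → ℝ) : IsSymmMat fun i j => v i * v j :=
  fun _ _ => mul_comm _ _

theorem quadForm_nonneg_of_mem_PucciMats {N : ℕ} {lam Lam : ℝ} (hlam : 0 ≤ lam) {A : Mat N}
    (hA : A ∈ PucciMats N lam Lam) (v : Fin N → ℝ) :
    0 ≤ ∑ i, ∑ j, A i j * v i * v j :=
  (mul_nonneg hlam (Finset.sum_nonneg fun i _ => sq_nonneg (v i))).trans (hA.2 v).1

theorem PucciInf_smul_rankOne_nonneg {N : ℕ} {lam : ℝ} (Lam : ℝ) (hlam : 0 ≤ lam) {c : ℝ}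
    (hc : 0 ≤ c) (v : Fin N → ℝ) :
    0 ≤ PucciInf lam Lam (fun i j => c * (v i * v j)) := by
  refine Real.sInf_nonneg ?_
  rintro _ ⟨A, hA, rfl⟩
  have htrace : ∑ i, ∑ j, A i j * (c * (v j * v i)) = c * ∑ i, ∑ j, A i j * v i * v j := by
    simp only [Finset.mul_sum]
    exact Finset.sum_congr rfl fun i _ => Finset.sum_congr rfl fun j _ => by ring
  dsimp only
  rw [htrace]
  exact mul_nonneg hc (quadForm_nonneg_of_mem_PucciMats hlam hA v)

theorem convex_combination_sub_linear_add_rankOne {N : ℕ} (l : (Fin N → ℝ) →ₗ[ℝ] Mat N)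
    (x y : Fin N → ℝ) {a b : ℝ} (hab : a + b = 1) :
    (a • (l x + fun i j => x i * x j) + b • (l y + fun i j => y i * y j)) -
        (l (a • x + b • y) + fun i j => (a • x + b • y) i * (a • x + b • y) j) =
      fun i j => a * b * ((x - y) i * (x - y) j) := by
  obtain rfl : b = 1 - a := by linarith
  funext i j
  simp only [map_add, map_smul, Pi.add_apply, Pi.sub_apply, Pi.smul_apply, smul_eq_mul]
  ring

section

variable {N : ℕ} {F : Mat N → (Fin N → ℝ) → ℝ → ℝ}

theorem subadditive_of_sub_le
    (hH3 : ∀ (M M' : Mat N) (p p' : Fin N → ℝ) (u u' : ℝ),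
      F M p u - F M' p' u' ≤ F (M - M') (p - p') (u - u'))
    (M M' : Mat N) (p p' : Fin N → ℝ) (u u' : ℝ) :
    F (M + M') (p + p') (u + u') ≤ F M p u + F M' p' u' := by
  have h := hH3 (M + M') M' (p + p') p' (u + u') u'
  simp only [add_sub_cancel_right] at h
  linarith

theorem le_of_PucciInf_sub_nonneg {lam Lam gamma delta : ℝ}
    (hH1 : ∀ (M M' : Mat N), IsSymmMat M → IsSymmMat M' →
      ∀ (p p' : Fin N → ℝ) (u u' : ℝ),
      PucciInf lam Lam (M - M') - gamma * ‖p - p'‖ - delta * |u - u'| ≤ F M p u - F M' p' u')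
    {M M' : Mat N} (hM : IsSymmMat M) (hM' : IsSymmMat M')
    (hpos : 0 ≤ PucciInf lam Lam (M - M')) (p : Fin N → ℝ) (u : ℝ) :
    F M' p u ≤ F M p u := by
  have h := hH1 M M' hM hM' p p u u
  simp only [sub_self, norm_zero, abs_zero, mul_zero, sub_zero] at h
  linarith

end

theorem stmt_17_general
    {N : ℕ} (lam Lam gamma delta : ℝ)
    (hlam : 0 < lam)
    (F : Mat N → (Fin N → ℝ) → ℝ → ℝ)
    (hH0 : ∀ t : ℝ, 0 ≤ t → ∀ (M : Mat N) (p : Fin N → ℝ) (u : ℝ),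
        F (t • M) (t • p) (t * u) = t * F M p u)
    (hH1 : ∀ (M M' : Mat N), IsSymmMat M → IsSymmMat M' →
        ∀ (p p' : Fin N → ℝ) (u u' : ℝ),
        PucciInf lam Lam (M - M') - gamma * ‖p - p'‖ - delta * |u - u'|
            ≤ F M p u - F M' p' u' ∧
          F M p u - F M' p' u'
            ≤ PucciSup lam Lam (M - M') + gamma * ‖p - p'‖ + delta * |u - u'|)
    (hH3 : ∀ (M M' : Mat N) (p p' : Fin N → ℝ) (u u' : ℝ),
        -(F (-(M - M')) (-(p - p')) (-(u - u'))) ≤ F M p u - F M' p' u' ∧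
        F M p u - F M' p' u' ≤ F (M - M') (p - p') (u - u'))
    (l : (Fin N → ℝ) →ₗ[ℝ] Mat N) (hl : ∀ p : Fin N → ℝ, IsSymmMat (l p)) :
    ConvexOn ℝ univ (fun p : Fin N → ℝ => F (l p + fun i j => p i * p j) p 1) := by
  have hFconv : ConvexOn ℝ univ fun q : Mat N × (Fin N → ℝ) × ℝ => F q.1 q.2.1 q.2.2 :=
    convexOn_univ_of_subadditive_of_homogeneous
      (fun _ _ => subadditive_of_sub_le (fun _ _ _ _ _ _ => (hH3 _ _ _ _ _ _).2) _ _ _ _ _ _)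
      (fun t ht _ => hH0 t ht _ _ _)
  have hsymm (p : Fin N → ℝ) : IsSymmMat (l p + fun i j => p i * p j) :=
    (hl p).add (isSymmMat_rankOne p)
  refine ⟨convex_univ, fun x _ y _ a b ha hb hab => ?_⟩
  have hdefect : 0 ≤ PucciInf lam Lam ((a • (l x + fun i j => x i * x j) +
      b • (l y + fun i j => y i * y j)) -
      (l (a • x + b • y) + fun i j => (a • x + b • y) i * (a • x + b • y) j)) := by
    rw [convex_combination_sub_linear_add_rankOne l x y hab]
    exact PucciInf_smul_rankOne_nonneg Lam hlam.le (mul_nonneg ha hb) (x - y)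
  have hmono := le_of_PucciInf_sub_nonneg
    (fun _ _ hM hM' _ _ _ _ => (hH1 _ _ hM hM' _ _ _ _).1)
    (((hsymm x).smul a).add ((hsymm y).smul b)) (hsymm (a • x + b • y)) hdefect
    (a • x + b • y) 1
  have hcomb := hFconv.2 (mem_univ (l x + fun i j => x i * x j, x, 1))
    (mem_univ (l y + fun i j => y i * y j, y, 1)) ha hb hab
  simp only [Prod.smul_mk, Prod.mk_add_mk, smul_eq_mul, mul_one, hab] at hcomb ⊢
  exact hmono.trans hcomb

theorem stmt_17
    {N : ℕ} (lam Lam gamma delta : ℝ)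
    (hlam : 0 < lam) (hlL : lam ≤ Lam) (hg : 0 ≤ gamma) (hd : 0 ≤ delta)
    (F : Mat N → (Fin N → ℝ) → ℝ → ℝ)
    (hH0 : ∀ t : ℝ, 0 ≤ t → ∀ (M : Mat N) (p : Fin N → ℝ) (u : ℝ),
        F (t • M) (t • p) (t * u) = t * F M p u)
    (hH1 : ∀ (M M' : Mat N), IsSymmMat M → IsSymmMat M' →
        ∀ (p p' : Fin N → ℝ) (u u' : ℝ),
        PucciInf lam Lam (M - M') - gamma * ‖p - p'‖ - delta * |u - u'|
            ≤ F M p u - F M' p' u' ∧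
          F M p u - F M' p' u'
            ≤ PucciSup lam Lam (M - M') + gamma * ‖p - p'‖ + delta * |u - u'|)
    (hH3 : ∀ (M M' : Mat N) (p p' : Fin N → ℝ) (u u' : ℝ),
        -(F (-(M - M')) (-(p - p')) (-(u - u'))) ≤ F M p u - F M' p' u' ∧
        F M p u - F M' p' u' ≤ F (M - M') (p - p') (u - u'))
    (l : (Fin N → ℝ) →ₗ[ℝ] Mat N) (hl : ∀ p : Fin N → ℝ, IsSymmMat (l p)) :
    ConvexOn ℝ univ (fun p : Fin N → ℝ => F (l p + fun i j => p i * p j) p 1) :=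
  stmt_17_general lam Lam gamma delta hlam F hH0 hH1 hH3 l hl

end
end

section
/- Let Ω̄ ⊂ ℝ^N be compact, let n ∈ ℕ, and let R ⊂ C(Ω̄) × [−n, n] be a compact connected set (C(Ω̄) carrying the uniform norm) such that the projection 𝒫(u,t) = t satisfies 𝒫(R) = [−n, n]. Let [t₋, t₊] ⊂ [−n, n] and set R₀ = {(u,t) ∈ R : t ∈ [t₋, t₊]}. Then there exists a connected component E₀ of R₀ such that 𝒫(E₀) = [t₋, t₊]. -/
open MeasureTheory Metric Set Filter Topology
open scoped UniformConvergence ENNReal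

noncomputable section

/-- The connected components of a compact Hausdorff space form a profinite space, in which
disjoint closed sets are separated by a clopen set. -/
theorem exists_isClopen_of_disjoint_connectedComponent {X : Type*} [TopologicalSpace X]
    [CompactSpace X] [T2Space X] {A B : Set X} (hA : IsClosed A) (hB : IsClosed B)
    (h : ∀ a ∈ A, Disjoint (connectedComponent a) B) :
    ∃ C : Set X, IsClopen C ∧ A ⊆ C ∧ Disjoint C B := by
  have hmk := ConnectedComponents.continuous_coe (α := X)
  obtain ⟨C, hC, hAC, hCB⟩ := exists_clopen_of_closed_subset_open
    (hA.isCompact.image hmk).isClosed (hB.isCompact.image hmk).isClosed.isOpen_compl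
    (by
      rintro _ ⟨a, ha, rfl⟩ ⟨b, hb, hab⟩
      rw [ConnectedComponents.coe_eq_coe] at hab
      exact (h a ha).ne_of_mem (hab ▸ mem_connectedComponent) hb rfl)
  refine ⟨ConnectedComponents.mk ⁻¹' C, hC.preimage hmk, fun a ha => hAC ⟨a, ha, rfl⟩, ?_⟩
  exact Set.disjoint_left.2 fun b hbC hb => hCB hbC ⟨b, hb, rfl⟩

theorem IsCompact.exists_separation_of_disjoint_connectedComponentIn {X : Type*}
    [TopologicalSpace X] [T2Space X] {S A B : Set X} (hS : IsCompact S) (hA : IsClosed A)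
    (hB : IsClosed B) (h : ∀ a ∈ S ∩ A, Disjoint (connectedComponentIn S a) B) :
    ∃ P ⊆ S, IsClosed P ∧ IsClosed (S \ P) ∧ S ∩ A ⊆ P ∧ Disjoint P B := by
  have : CompactSpace S := isCompact_iff_compactSpace.mp hS
  have hval : IsClosedMap ((↑) : S → X) := hS.isClosed.isClosedMap_subtype_val
  obtain ⟨C, hC, hAC, hCB⟩ := exists_isClopen_of_disjoint_connectedComponent
    (hA.preimage continuous_subtype_val) (hB.preimage continuous_subtype_val)
    fun a ha => by
      have := h a.1 ⟨a.2, ha⟩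
      rwa [connectedComponentIn_eq_image a.2, Set.disjoint_image_left] at this
  refine ⟨(↑) '' C, Subtype.coe_image_subset S C, hval _ hC.isClosed, ?_,
    fun a ha => ⟨⟨a, ha.1⟩, hAC ha.2, rfl⟩, Set.disjoint_image_left.2 hCB⟩
  have hcompl : S \ (↑) '' C = (↑) '' Cᶜ := by
    rw [image_compl_eq_range_sdiff_image Subtype.val_injective, Subtype.range_coe]
  exact hcompl ▸ hval _ hC.compl.isClosed

/-- If no component of `R₀ = R ∩ f⁻¹[s, t]` joins the levels `f = s` and `f = t`, a clopen
piece of `R₀` containing the level `f = s` glued to `R ∩ {f ≤ s}`, and its complement glued to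
`R ∩ {f ≥ t}`, split `R` into two disjoint closed sets. -/
theorem IsCompact.exists_connectedComponentIn_image_eq_Icc {X : Type*} [TopologicalSpace X]
    [T2Space X] {R : Set X} (hR : IsCompact R) (hRc : IsPreconnected R) {f : X → ℝ}
    (hf : Continuous f) {a b : X} {s t : ℝ} (ha : a ∈ R) (hb : b ∈ R) (has : f a = s)
    (hbt : f b = t) (hst : s ≤ t) :
    ∃ x ∈ {z ∈ R | f z ∈ Icc s t},
      f '' connectedComponentIn {z ∈ R | f z ∈ Icc s t} x = Icc s t := by
  set R₀ := {z ∈ R | f z ∈ Icc s t}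
  suffices ∃ x ∈ R₀, f x = s ∧ ∃ y ∈ connectedComponentIn R₀ x, f y = t by
    obtain ⟨x, hx, hxs, y, hy, hyt⟩ := this
    refine ⟨x, hx, subset_antisymm ?_ ?_⟩
    · rintro _ ⟨z, hz, rfl⟩
      exact (connectedComponentIn_subset R₀ x hz).2
    · exact (isPreconnected_connectedComponentIn.image f hf.continuousOn).Icc_subset
        ⟨x, mem_connectedComponentIn hx, hxs⟩ ⟨y, hy, hyt⟩
  by_contra! hsep
  have hR₀ : IsCompact R₀ := hR.inter_right (isClosed_Icc.preimage hf)
  obtain ⟨P, hPR₀, hP, hQ, hsP, hPt⟩ := hR₀.exists_separation_of_disjoint_connectedComponentIn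
    (isClosed_singleton.preimage hf) (isClosed_singleton.preimage hf)
    fun x hx => Set.disjoint_left.2 fun y hy hyt => hsep x hx.1 hx.2 y hy hyt
  have haP : a ∈ P := hsP ⟨⟨ha, has.ge, has.le.trans hst⟩, has⟩
  have hst' : s < t := hst.lt_of_ne fun h => Set.disjoint_left.1 hPt haP (has.trans h)
  obtain ⟨z, -, hzP₁, hzQ₁⟩ := isPreconnected_closed_iff.1 hRc
    (P ∪ R ∩ f ⁻¹' Iic s) ((R₀ \ P) ∪ R ∩ f ⁻¹' Ici t)
    (hP.union (hR.isClosed.inter (isClosed_Iic.preimage hf)))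
    (hQ.union (hR.isClosed.inter (isClosed_Ici.preimage hf)))
    (by
      intro z hz
      rcases le_or_gt (f z) s with hzs | hzs
      · exact Or.inl (Or.inr ⟨hz, hzs⟩)
      rcases le_or_gt t (f z) with hzt | hzt
      · exact Or.inr (Or.inr ⟨hz, hzt⟩)
      by_cases hzP : z ∈ P
      · exact Or.inl (Or.inl hzP)
      · exact Or.inr (Or.inl ⟨⟨hz, hzs.le, hzt.le⟩, hzP⟩))
    ⟨a, ha, Or.inl haP⟩ ⟨b, hb, Or.inr ⟨hb, hbt.ge⟩⟩
  rcases hzP₁ with hzP | ⟨-, hzs⟩ <;> rcases hzQ₁ with ⟨hzR₀, hznP⟩ | ⟨-, hzt⟩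
  · exact hznP hzP
  · exact Set.disjoint_left.1 hPt hzP (le_antisymm (hPR₀ hzP).2.2 hzt)
  · exact hznP (hsP ⟨hzR₀, le_antisymm hzs hzR₀.2.1⟩)
  · exact (hst'.trans_le (hzt.trans (mem_Iic.1 hzs))).false

theorem stmt_18_general
    {N : ℕ} (K : Set (Fin N → ℝ))
    (n : ℕ) (R : Set (ContinuousMap ↥K ℝ × ℝ))
    (hRcomp : IsCompact R) (hRconn : IsConnected R)
    (hRproj : (fun z : ContinuousMap ↥K ℝ × ℝ => z.2) '' R = Icc (-(n:ℝ)) n)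
    (tm tp : ℝ) (htm : tm ≤ tp) (hsub : Icc tm tp ⊆ Icc (-(n:ℝ)) n) :
    ∃ E₀ : Set (ContinuousMap ↥K ℝ × ℝ),
      -- E₀ is a connected component of R₀ = {(u,t) ∈ R : t ∈ [t₋, t₊]} ...
      E₀ ⊆ {z ∈ R | z.2 ∈ Icc tm tp} ∧ E₀.Nonempty ∧ IsPreconnected E₀ ∧
      (∀ E : Set (ContinuousMap ↥K ℝ × ℝ),
        E₀ ⊆ E → E ⊆ {z ∈ R | z.2 ∈ Icc tm tp} → IsPreconnected E → E = E₀) ∧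
      -- ... whose projection is all of [t₋, t₊]
      (fun z : ContinuousMap ↥K ℝ × ℝ => z.2) '' E₀ = Icc tm tp := by
  obtain ⟨a, ha, has⟩ : tm ∈ Prod.snd '' R := hRproj ▸ hsub ⟨le_rfl, htm⟩
  obtain ⟨b, hb, hbt⟩ : tp ∈ Prod.snd '' R := hRproj ▸ hsub ⟨htm, le_rfl⟩
  obtain ⟨x, hx, himage⟩ := hRcomp.exists_connectedComponentIn_image_eq_Icc
    hRconn.isPreconnected continuous_snd ha hb has hbt htm
  refine ⟨_, connectedComponentIn_subset _ x, ⟨x, mem_connectedComponentIn hx⟩,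
    isPreconnected_connectedComponentIn, fun E hE hER₀ hEc => ?_, himage⟩
  exact (hEc.subset_connectedComponentIn (hE (mem_connectedComponentIn hx)) hER₀).antisymm hE

theorem stmt_18
    {N : ℕ} (K : Set (Fin N → ℝ)) (hK : IsCompact K)
    (n : ℕ) (R : Set (ContinuousMap ↥K ℝ × ℝ))
    (hRcomp : IsCompact R) (hRconn : IsConnected R)
    (hRproj : (fun z : ContinuousMap ↥K ℝ × ℝ => z.2) '' R = Icc (-(n:ℝ)) n)
    (tm tp : ℝ) (htm : tm ≤ tp) (hsub : Icc tm tp ⊆ Icc (-(n:ℝ)) n) :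
    ∃ E₀ : Set (ContinuousMap ↥K ℝ × ℝ),
      -- E₀ is a connected component of R₀ = {(u,t) ∈ R : t ∈ [t₋, t₊]} ...
      E₀ ⊆ {z ∈ R | z.2 ∈ Icc tm tp} ∧ E₀.Nonempty ∧ IsPreconnected E₀ ∧
      (∀ E : Set (ContinuousMap ↥K ℝ × ℝ),
        E₀ ⊆ E → E ⊆ {z ∈ R | z.2 ∈ Icc tm tp} → IsPreconnected E → E = E₀) ∧
      -- ... whose projection is all of [t₋, t₊]
      (fun z : ContinuousMap ↥K ℝ × ℝ => z.2) '' E₀ = Icc tm tp :=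
  stmt_18_general K n R hRcomp hRconn hRproj tm tp htm hsub

end
end
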